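/- arXiv:1907.02553 — 2 statements merged into one kernel-verified Lean document; each statement's English description precedes it below -/
import Mathlib

section
/- Integration by parts for the Newton integral: let a, b ∈ ℝ ∪ {±∞}, a < b, and F, G be primitives on (a,b) of f, g respectively. If two of the three quantities ∫ₐᵇ fG, (FG)(b⁻) − (FG)(a⁺), ∫ₐᵇ Fg are defined and finite, then so is the third, and ∫ₐᵇ fG = ((FG)(b⁻) − (FG)(a⁺)) − ∫ₐᵇ Fg. -/
open Filter Set Topology

noncomputable section

/-- The open interval of reals with extended-real endpoints. -/
def eIoo (a b : EReal) : Set ℝ := {x : ℝ | a < (x : EReal) ∧ (x : EReal) < b}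

/-- The filter of approach to the endpoint `c` from within the interval `(a,b)`. -/
def endFilter (c a b : EReal) : Filter ℝ :=
  (nhds c).comap (fun x : ℝ => (x : EReal)) ⊓ Filter.principal (eIoo a b)

/-- `f` has Newton integral `v` over `(a,b)`: some primitive `F` of `f` on `(a,b)` has
finite one-sided limits `La` at `a⁺` and `Lb` at `b⁻`, and `v = Lb - La`. -/
def HasNewton (f : ℝ → ℝ) (a b : EReal) (v : ℝ) : Prop :=
  ∃ (F : ℝ → ℝ) (La Lb : ℝ),
    (∀ x ∈ eIoo a b, HasDerivAt F (f x) x) ∧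
    Filter.Tendsto F (endFilter a a b) (nhds La) ∧
    Filter.Tendsto F (endFilter b a b) (nhds Lb) ∧
    v = Lb - La

/-!
`FG` is a primitive of `fG + Fg`, and the Newton integral is additive. The only point needing
an argument is that a Newton integral is computed by *every* primitive, not just the one in its
definition: two primitives on the connected open set `(a,b)` differ by a constant.
-/

section Primitive

variable {a b : EReal}

lemma isOpen_eIoo (a b : EReal) : IsOpen (eIoo a b) :=
  isOpen_Ioo.preimage continuous_coe_real_ereal

lemma isPreconnected_eIoo (a b : EReal) : IsPreconnected (eIoo a b) :=
  (ordConnected_Ioo.preimage_mono EReal.coe_strictMono.monotone).isPreconnected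

lemma eIoo_mem_endFilter (c a b : EReal) : eIoo a b ∈ endFilter c a b :=
  le_principal_iff.1 inf_le_right

lemma exists_eqOn_add_const_of_hasDerivAt {φ Φ H : ℝ → ℝ}
    (hΦ : ∀ x ∈ eIoo a b, HasDerivAt Φ (φ x) x) (hH : ∀ x ∈ eIoo a b, HasDerivAt H (φ x) x) :
    ∃ c, ∀ x ∈ eIoo a b, Φ x = H x + c :=
  (isOpen_eIoo a b).exists_eq_add_of_deriv_eq (isPreconnected_eIoo a b)
    (fun x hx => (hΦ x hx).differentiableAt.differentiableWithinAt)
    (fun x hx => (hH x hx).differentiableAt.differentiableWithinAt)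
    (fun x hx => (hΦ x hx).deriv.trans (hH x hx).deriv.symm)

end Primitive

namespace HasNewton

variable {f g : ℝ → ℝ} {a b : EReal} {v w : ℝ}

lemma add (hf : HasNewton f a b v) (hg : HasNewton g a b w) :
    HasNewton (fun x => f x + g x) a b (v + w) := by
  obtain ⟨F, La, Lb, hF, hFa, hFb, rfl⟩ := hf
  obtain ⟨G, Ma, Mb, hG, hGa, hGb, rfl⟩ := hg
  exact ⟨fun x => F x + G x, La + Ma, Lb + Mb, fun x hx => (hF x hx).add (hG x hx),
    hFa.add hGa, hFb.add hGb, by ring⟩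

lemma sub (hf : HasNewton f a b v) (hg : HasNewton g a b w) :
    HasNewton (fun x => f x - g x) a b (v - w) := by
  obtain ⟨F, La, Lb, hF, hFa, hFb, rfl⟩ := hf
  obtain ⟨G, Ma, Mb, hG, hGa, hGb, rfl⟩ := hg
  exact ⟨fun x => F x - G x, La - Ma, Lb - Mb, fun x hx => (hF x hx).sub (hG x hx),
    hFa.sub hGa, hFb.sub hGb, by ring⟩

lemma exists_tendsto_of_hasDerivAt (hf : HasNewton f a b v) {Φ : ℝ → ℝ}
    (hΦ : ∀ x ∈ eIoo a b, HasDerivAt Φ (f x) x) :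
    ∃ La Lb : ℝ, Tendsto Φ (endFilter a a b) (𝓝 La) ∧ Tendsto Φ (endFilter b a b) (𝓝 Lb) ∧
      v = Lb - La := by
  obtain ⟨F, La, Lb, hF, hFa, hFb, rfl⟩ := hf
  obtain ⟨c, hc⟩ := exists_eqOn_add_const_of_hasDerivAt hΦ hF
  have hΦF (e : EReal) : (fun x => F x + c) =ᶠ[endFilter e a b] Φ :=
    eventually_of_mem (eIoo_mem_endFilter e a b) fun x hx => (hc x hx).symm
  exact ⟨La + c, Lb + c, (hFa.add_const c).congr' (hΦF a), (hFb.add_const c).congr' (hΦF b),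
    by ring⟩

end HasNewton

theorem stmt_6_general (a b : EReal) (f g F G : ℝ → ℝ)
    (hF : ∀ x ∈ eIoo a b, HasDerivAt F (f x) x)
    (hG : ∀ x ∈ eIoo a b, HasDerivAt G (g x) x) :
    (∀ v w : ℝ, HasNewton (fun x => f x * G x) a b v →
      (∃ La Lb : ℝ, Filter.Tendsto (fun x => F x * G x) (endFilter a a b) (nhds La) ∧
        Filter.Tendsto (fun x => F x * G x) (endFilter b a b) (nhds Lb) ∧ w = Lb - La) →
      HasNewton (fun x => F x * g x) a b (w - v)) ∧
    (∀ v u : ℝ, HasNewton (fun x => f x * G x) a b v →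
      HasNewton (fun x => F x * g x) a b u →
      (∃ La Lb : ℝ, Filter.Tendsto (fun x => F x * G x) (endFilter a a b) (nhds La) ∧
        Filter.Tendsto (fun x => F x * G x) (endFilter b a b) (nhds Lb) ∧ v + u = Lb - La)) ∧
    (∀ w u : ℝ,
      (∃ La Lb : ℝ, Filter.Tendsto (fun x => F x * G x) (endFilter a a b) (nhds La) ∧
        Filter.Tendsto (fun x => F x * G x) (endFilter b a b) (nhds Lb) ∧ w = Lb - La) →
      HasNewton (fun x => F x * g x) a b u →
      HasNewton (fun x => f x * G x) a b (w - u)) := by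
  have hFG : ∀ x ∈ eIoo a b,
      HasDerivAt (fun x => F x * G x) (f x * G x + F x * g x) x :=
    fun x hx => (hF x hx).mul (hG x hx)
  refine ⟨?_, ?_, ?_⟩
  · rintro v w hfG ⟨La, Lb, ha, hb, rfl⟩
    simpa using (show HasNewton _ a b (Lb - La) from ⟨_, La, Lb, hFG, ha, hb, rfl⟩).sub hfG
  · exact fun v u hfG hFg => (hfG.add hFg).exists_tendsto_of_hasDerivAt hFG
  · rintro w u ⟨La, Lb, ha, hb, rfl⟩ hFg
    simpa using (show HasNewton _ a b (Lb - La) from ⟨_, La, Lb, hFG, ha, hb, rfl⟩).sub hFg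

/-- Integration by parts for the Newton integral: with `F' = f` and `G' = g` on `(a,b)`,
if two of the three terms (the integral of `f*G`, the difference of limits of `F*G`,
and the integral of `F*g`) are defined and finite, so is the third, and the first equals
the second minus the third. -/
theorem stmt_6 (a b : EReal) (hab : a < b) (f g F G : ℝ → ℝ)
    (hF : ∀ x ∈ eIoo a b, HasDerivAt F (f x) x)
    (hG : ∀ x ∈ eIoo a b, HasDerivAt G (g x) x) :
    (∀ v w : ℝ, HasNewton (fun x => f x * G x) a b v →
      (∃ La Lb : ℝ, Filter.Tendsto (fun x => F x * G x) (endFilter a a b) (nhds La) ∧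
        Filter.Tendsto (fun x => F x * G x) (endFilter b a b) (nhds Lb) ∧ w = Lb - La) →
      HasNewton (fun x => F x * g x) a b (w - v)) ∧
    (∀ v u : ℝ, HasNewton (fun x => f x * G x) a b v →
      HasNewton (fun x => F x * g x) a b u →
      (∃ La Lb : ℝ, Filter.Tendsto (fun x => F x * G x) (endFilter a a b) (nhds La) ∧
        Filter.Tendsto (fun x => F x * G x) (endFilter b a b) (nhds Lb) ∧ v + u = Lb - La)) ∧
    (∀ w u : ℝ,
      (∃ La Lb : ℝ, Filter.Tendsto (fun x => F x * G x) (endFilter a a b) (nhds La) ∧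
        Filter.Tendsto (fun x => F x * G x) (endFilter b a b) (nhds Lb) ∧ w = Lb - La) →
      HasNewton (fun x => F x * g x) a b u →
      HasNewton (fun x => f x * G x) a b (w - u)) :=
  stmt_6_general a b f g F G hF hG
end
end

section
/- A Fubini theorem for decaying continuous functions: if c > 0 and f : [0,∞)² → ℝ is continuous with |f(x,y)| ≤ c·max(x,y)^{−3} whenever max(x,y) ≥ 1, then both iterated Newton integrals ∫₀^∞(∫₀^∞ f(x,y) dy) dx and ∫₀^∞(∫₀^∞ f(x,y) dx) dy exist and are equal. -/
/-!
Continuity bounds `f` on the unit square, and with the decay hypothesis this gives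
`|f(x,y)| ≤ K (1+x)^(-3/2) (1+y)^(-3/2)` on the quadrant, because `1 + x` and `1 + y` are at most
`2 max(1,x,y)`. A product bound of this kind makes `f` Lebesgue integrable on the quadrant and
dominates every slice, locally uniformly in the other variable, so the inner integrals are
continuous. The Newton integral over `(a,∞)` of a continuous Lebesgue-integrable function is its
Lebesgue integral (take the primitive `t ↦ ∫ s in a..t`), so both iterated Newton integrals exist
and equal the double Lebesgue integral by Fubini.
-/
open Filter Set Topology

noncomputable section

open MeasureTheory

lemma eIoo_coe_top (a : ℝ) : eIoo a ⊤ = Ioi a := by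
  ext x
  simp [eIoo]

lemma endFilter_coe_le_nhdsGT (a : ℝ) (b : EReal) : endFilter a a b ≤ 𝓝[>] a := by
  rw [endFilter, EReal.nhds_coe, comap_map EReal.coe_injective]
  exact inf_le_inf_left _ (principal_mono.2 fun x hx => EReal.coe_lt_coe_iff.1 hx.1)

lemma endFilter_top_le_atTop (a b : EReal) : endFilter ⊤ a b ≤ atTop :=
  inf_le_left.trans ((EReal.tendsto_coe_nhds_top_iff (f := id)).1 tendsto_comap)

theorem hasNewton_Ioi_of_integrableOn {g : ℝ → ℝ} {a : ℝ} (hcont : ContinuousOn g (Ioi a))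
    (hint : IntegrableOn g (Ioi a)) : HasNewton g a ⊤ (∫ x in Ioi a, g x) := by
  have hii : ∀ t, a ≤ t → IntervalIntegrable g volume a t := fun t ht =>
    (intervalIntegrable_iff_integrableOn_Ioc_of_le ht).2 (hint.mono_set Ioc_subset_Ioi_self)
  refine ⟨fun t => ∫ s in a..t, g s, 0, ∫ x in Ioi a, g x, ?_, ?_, ?_, (sub_zero _).symm⟩
  · intro t ht
    rw [eIoo_coe_top] at ht
    exact intervalIntegral.integral_hasDerivAt_right (hii t ht.le)
      (hcont.stronglyMeasurableAtFilter isOpen_Ioi t ht)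
      (hcont.continuousAt (isOpen_Ioi.mem_nhds ht))
  · have hF := intervalIntegral.continuousOn_primitive_interval' (hii (a + 1) (by linarith))
      left_mem_uIcc a left_mem_uIcc
    have hF' := hF.tendsto
    rw [intervalIntegral.integral_same] at hF'
    refine (hF'.mono_left (nhdsWithin_le_of_mem ?_)).mono_left (endFilter_coe_le_nhdsGT a ⊤)
    rw [uIcc_of_le (by linarith)]
    exact Icc_mem_nhdsGT (by linarith)
  · exact (intervalIntegral_tendsto_integral_Ioi a hint tendsto_id).mono_left
      (endFilter_top_le_atTop _ _)

section ProductBound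

variable {a b : ℝ} {f : ℝ × ℝ → ℝ} {g₁ g₂ : ℝ → ℝ}

lemma continuousOn_slice (hf : ContinuousOn f (Ioi a ×ˢ Ioi b)) {x : ℝ} (hx : a < x) :
    ContinuousOn (fun y => f (x, y)) (Ioi b) :=
  hf.comp (continuousOn_const.prodMk continuousOn_id) fun _ hy => ⟨hx, hy⟩

lemma integrableOn_slice_of_abs_le_mul (hf : ContinuousOn f (Ioi a ×ˢ Ioi b))
    (hg₂ : IntegrableOn g₂ (Ioi b)) (hfg : ∀ x > a, ∀ y > b, |f (x, y)| ≤ g₁ x * g₂ y)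
    {x : ℝ} (hx : a < x) : IntegrableOn (fun y => f (x, y)) (Ioi b) :=
  (hg₂.const_mul (g₁ x)).mono' ((continuousOn_slice hf hx).aestronglyMeasurable measurableSet_Ioi)
    (ae_restrict_of_forall_mem measurableSet_Ioi fun y hy => hfg x hx y hy)

lemma integrable_prod_of_abs_le_mul (hf : ContinuousOn f (Ioi a ×ˢ Ioi b))
    (hg₁ : IntegrableOn g₁ (Ioi a)) (hg₂ : IntegrableOn g₂ (Ioi b))
    (hfg : ∀ x > a, ∀ y > b, |f (x, y)| ≤ g₁ x * g₂ y) :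
    Integrable f ((volume.restrict (Ioi a)).prod (volume.restrict (Ioi b))) := by
  refine (hg₁.mul_prod hg₂).mono' ?_ ?_
  · rw [Measure.prod_restrict, ← Measure.volume_eq_prod]
    exact hf.aestronglyMeasurable (measurableSet_Ioi.prod measurableSet_Ioi)
  · rw [Measure.prod_restrict]
    exact ae_restrict_of_forall_mem (measurableSet_Ioi.prod measurableSet_Ioi)
      fun z hz => hfg z.1 hz.1 z.2 hz.2

lemma continuousOn_integral_slice_of_abs_le_mul (hf : ContinuousOn f (Ioi a ×ˢ Ioi b))
    (hg₁ : ContinuousOn g₁ (Ioi a)) (hg₂ : IntegrableOn g₂ (Ioi b))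
    (hfg : ∀ x > a, ∀ y > b, |f (x, y)| ≤ g₁ x * g₂ y) :
    ContinuousOn (fun x => ∫ y in Ioi b, f (x, y)) (Ioi a) := by
  intro x₀ hx₀
  have hnhds : Ioi a ∈ 𝓝 x₀ := isOpen_Ioi.mem_nhds hx₀
  have hg₁_lt : ∀ᶠ x in 𝓝 x₀, |g₁ x| < |g₁ x₀| + 1 :=
    (hg₁.continuousAt hnhds).abs.eventually_lt_const (lt_add_one _)
  refine ContinuousAt.continuousWithinAt
    (continuousAt_of_dominated (bound := fun y => (|g₁ x₀| + 1) * |g₂ y|) ?_ ?_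
      (hg₂.abs.const_mul _) ?_)
  · filter_upwards [hnhds] with x hx
    exact (continuousOn_slice hf hx).aestronglyMeasurable measurableSet_Ioi
  · filter_upwards [hnhds, hg₁_lt] with x hx hgx
    refine ae_restrict_of_forall_mem measurableSet_Ioi fun y hy => ?_
    calc ‖f (x, y)‖ ≤ g₁ x * g₂ y := hfg x hx y hy
      _ ≤ |g₁ x| * |g₂ y| := abs_mul (g₁ x) (g₂ y) ▸ le_abs_self _
      _ ≤ (|g₁ x₀| + 1) * |g₂ y| := by gcongr
  · refine ae_restrict_of_forall_mem measurableSet_Ioi fun y hy => ?_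
    exact ContinuousAt.comp (f := fun x => (x, y))
      (hf.continuousAt (prod_mem_nhds hnhds (isOpen_Ioi.mem_nhds hy))) (by fun_prop)

theorem exists_hasNewton_iterated_of_abs_le_mul (hf : ContinuousOn f (Ioi a ×ˢ Ioi b))
    (hg₁ : ContinuousOn g₁ (Ioi a)) (hg₁i : IntegrableOn g₁ (Ioi a))
    (hg₂i : IntegrableOn g₂ (Ioi b)) (hfg : ∀ x > a, ∀ y > b, |f (x, y)| ≤ g₁ x * g₂ y) :
    ∃ I : ℝ → ℝ, (∀ x > a, HasNewton (fun y => f (x, y)) b ⊤ (I x)) ∧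
      HasNewton I a ⊤ (∫ z, f z ∂(volume.restrict (Ioi a)).prod (volume.restrict (Ioi b))) := by
  have hint := integrable_prod_of_abs_le_mul hf hg₁i hg₂i hfg
  refine ⟨fun x => ∫ y in Ioi b, f (x, y), fun x hx => ?_, ?_⟩
  · exact hasNewton_Ioi_of_integrableOn (continuousOn_slice hf hx)
      (integrableOn_slice_of_abs_le_mul hf hg₂i hfg hx)
  · rw [integral_prod f hint]
    exact hasNewton_Ioi_of_integrableOn
      (continuousOn_integral_slice_of_abs_le_mul hf hg₁ hg₂i hfg) hint.integral_prod_left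

end ProductBound

lemma integrableOn_Ioi_one_add_rpow_neg {r : ℝ} (hr : 1 < r) :
    IntegrableOn (fun t : ℝ => (1 + t) ^ (-r)) (Ioi 0) :=
  (integrable_one_add_norm (E := ℝ) (by simpa using hr)).integrableOn.congr_fun
    (fun t ht => by simp only [Real.norm_of_nonneg (le_of_lt ht)]) measurableSet_Ioi

lemma continuousOn_Ioi_one_add_rpow (r : ℝ) :
    ContinuousOn (fun t : ℝ => (1 + t) ^ r) (Ioi 0) :=
  ContinuousOn.rpow_const (f := fun t => 1 + t) (by fun_prop) fun t ht =>
    Or.inl (by linarith [mem_Ioi.1 ht])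

lemma inv_two_mul_pow_three_le_mul_one_add_rpow {M x y : ℝ} (hM : 1 ≤ M) (hx : 0 ≤ x)
    (hy : 0 ≤ y) (hxM : x ≤ M) (hyM : y ≤ M) :
    ((2 * M) ^ 3)⁻¹ ≤ (1 + x) ^ (-(3 / 2 : ℝ)) * (1 + y) ^ (-(3 / 2 : ℝ)) := by
  have hM₀ : 0 < 2 * M := by linarith
  have hle : ∀ t, 0 ≤ t → t ≤ M → (2 * M) ^ (-(3 / 2 : ℝ)) ≤ (1 + t) ^ (-(3 / 2 : ℝ)) :=
    fun t ht htM => Real.rpow_le_rpow_of_nonpos (by linarith) (by linarith) (by norm_num)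
  calc ((2 * M) ^ 3)⁻¹ = (2 * M) ^ (-(3 / 2 : ℝ)) * (2 * M) ^ (-(3 / 2 : ℝ)) := by
        rw [← Real.rpow_add hM₀, ← Real.rpow_natCast, ← Real.rpow_neg hM₀.le]
        norm_num
    _ ≤ _ := mul_le_mul (hle x hx hxM) (hle y hy hyM) (by positivity) (by positivity)

lemma abs_le_mul_one_add_rpow_of_decay {c C : ℝ} (hc : 0 < c) {f : ℝ × ℝ → ℝ}
    (hC : ∀ p ∈ Icc (0 : ℝ) 1 ×ˢ Icc (0 : ℝ) 1, ‖f p‖ ≤ C)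
    (hdecay : ∀ x y : ℝ, 0 ≤ x → 0 ≤ y → 1 ≤ max x y → |f (x, y)| ≤ c / (max x y) ^ 3)
    {x y : ℝ} (hx : 0 ≤ x) (hy : 0 ≤ y) :
    |f (x, y)| ≤ 8 * max C c * (1 + x) ^ (-(3 / 2 : ℝ)) * (1 + y) ^ (-(3 / 2 : ℝ)) := by
  set M := max 1 (max x y)
  have hM : 1 ≤ M := le_max_left _ _
  have hfM : |f (x, y)| ≤ max C c / M ^ 3 := by
    rcases le_total (max x y) 1 with h | h
    · rw [show M = 1 from max_eq_left h, one_pow, div_one]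
      exact (hC (x, y) ⟨⟨hx, (le_max_left _ _).trans h⟩, ⟨hy, (le_max_right _ _).trans h⟩⟩).trans
        (le_max_left _ _)
    · rw [show M = max x y from max_eq_right h]
      exact (hdecay x y hx hy h).trans
        (div_le_div_of_nonneg_right (le_max_right _ _) (by positivity))
  have hK : 0 ≤ 8 * max C c := by positivity
  calc |f (x, y)| ≤ max C c / M ^ 3 := hfM
    _ = 8 * max C c * ((2 * M) ^ 3)⁻¹ := by field_simp; ring
    _ ≤ 8 * max C c * ((1 + x) ^ (-(3 / 2 : ℝ)) * (1 + y) ^ (-(3 / 2 : ℝ))) := by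
      gcongr
      exact inv_two_mul_pow_three_le_mul_one_add_rpow hM hx hy
        ((le_max_left _ _).trans (le_max_right _ _)) ((le_max_right _ _).trans (le_max_right _ _))
    _ = _ := (mul_assoc _ _ _).symm

/-- A Fubini theorem for iterated Newton integrals of continuous functions on the closed
positive quadrant decaying like `max(x,y)^(-3)`. -/
theorem stmt_10 (c : ℝ) (hc : 0 < c) (f : ℝ × ℝ → ℝ)
    (hcont : ContinuousOn f (Set.Ici (0 : ℝ) ×ˢ Set.Ici (0 : ℝ)))
    (hdecay : ∀ x y : ℝ, 0 ≤ x → 0 ≤ y → 1 ≤ max x y →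
      |f (x, y)| ≤ c / (max x y) ^ 3) :
    ∃ (I J : ℝ → ℝ) (v : ℝ),
      (∀ x : ℝ, 0 < x → HasNewton (fun y => f (x, y)) ((0 : ℝ) : EReal) ⊤ (I x)) ∧
      HasNewton I ((0 : ℝ) : EReal) ⊤ v ∧
      (∀ y : ℝ, 0 < y → HasNewton (fun x => f (x, y)) ((0 : ℝ) : EReal) ⊤ (J y)) ∧
      HasNewton J ((0 : ℝ) : EReal) ⊤ v := by
  obtain ⟨C, hC⟩ := (isCompact_Icc.prod isCompact_Icc).exists_bound_of_continuousOn
    (hcont.mono (prod_mono Icc_subset_Ici_self Icc_subset_Ici_self))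
  set w : ℝ → ℝ := fun t => (1 + t) ^ (-(3 / 2 : ℝ))
  set K := 8 * max C c
  have hw : ContinuousOn w (Ioi 0) := continuousOn_Ioi_one_add_rpow _
  have hwi : IntegrableOn w (Ioi 0) := integrableOn_Ioi_one_add_rpow_neg (by norm_num)
  have hquad : ContinuousOn f (Ioi 0 ×ˢ Ioi 0) :=
    hcont.mono (prod_mono Ioi_subset_Ici_self Ioi_subset_Ici_self)
  have hfw : ∀ x > 0, ∀ y > 0, |f (x, y)| ≤ K * w x * w y := fun x hx y hy =>
    abs_le_mul_one_add_rpow_of_decay hc hC hdecay hx.le hy.le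
  obtain ⟨I, hI, hIv⟩ := exists_hasNewton_iterated_of_abs_le_mul hquad
    (continuousOn_const.mul hw) (hwi.const_mul K) hwi hfw
  obtain ⟨J, hJ, hJv⟩ := exists_hasNewton_iterated_of_abs_le_mul (f := f ∘ Prod.swap)
    (hquad.comp continuous_swap.continuousOn fun z hz => ⟨hz.2, hz.1⟩) hw hwi (hwi.const_mul K)
    fun y hy x hx => (hfw x hx y hy).trans_eq (by ring)
  rw [Function.comp_def, integral_prod_swap] at hJv
  exact ⟨I, J, _, hI, hIv, hJ, hJv⟩
end
end
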